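/- Let Δ = star(γ) be a vertex star in ℝ² and let 0 ≤ r < s be integers. Then S^r(Δ) ⊆ S^{r,s}(Δ°) (every C^r spline on Δ is C^s at γ) if and only if dim S_s^r(Δ) = C(s+2,2), i.e., the space of C^r splines of degree ≤ s on Δ consists only of global polynomials. -/

import Mathlib

open MvPolynomial
open scoped Classical

noncomputable section

/-- `ℝ[x,y]`, the polynomial ring on the plane. -/
abbrev P2 := MvPolynomial (Fin 2) ℝ

/-- Binomial coefficient `C(a,2)` with the convention `C(a,2) = 0` for `a < 2`. -/
def bin2 (a : ℤ) : ℤ := (a.toNat.choose 2 : ℤ)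

/-- The affine linear form `a(x - γ₁) + b(y - γ₂)` vanishing on the line through
`γ = (γ₁, γ₂)` with direction orthogonal to `(a,b)`. -/
def edgeForm (γ₁ γ₂ a b : ℝ) : P2 :=
  C a * (X 0 - C γ₁) + C b * (X 1 - C γ₂)

/-- The maximal ideal of polynomials vanishing at `γ = (γ₁, γ₂)`. -/
def mIdeal (γ₁ γ₂ : ℝ) : Ideal P2 :=
  Ideal.span {X 0 - C γ₁, X 1 - C γ₂}

/-- The space of splines of degree at most `d` on the star of the interior vertex
`γ = (γ₁, γ₂)` whose `n` interior edges, in cyclic order, lie on the lines through `γ` cut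
out by the affine forms `ℓ_i = a_i(x-γ₁) + b_i(y-γ₂)`, with smoothness `r` across every
interior edge and supersmoothness `s` at `γ`: tuples `(f_0,…,f_{n-1})` of polynomials of
degree at most `d` (one for each triangle) whose consecutive differences satisfy
`f_i - f_{i+1} ∈ ⟨ℓ_i^{r+1}⟩ ∩ m_γ^{s+1}` (Billera's criterion together with the vertex
supersmoothness condition). -/
def splineSpace (n : ℕ) [NeZero n] (d r s : ℕ) (γ₁ γ₂ : ℝ) (a b : Fin n → ℝ) :
    Submodule ℝ (Fin n → P2) :=
  (⨅ i : Fin n, Submodule.comap (LinearMap.proj i : (Fin n → P2) →ₗ[ℝ] P2)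
      (restrictTotalDegree (Fin 2) ℝ d))
  ⊓ ⨅ i : Fin n, Submodule.comap
      ((LinearMap.proj i : (Fin n → P2) →ₗ[ℝ] P2) - LinearMap.proj (i + 1))
      (Submodule.restrictScalars ℝ
        ((Ideal.span {edgeForm γ₁ γ₂ (a i) (b i) ^ (r + 1)}
          ⊓ (mIdeal γ₁ γ₂) ^ (s + 1) : Ideal P2) : Submodule P2 P2))

namespace FHaux

/-! ### The maximal ideal at the origin and its powers -/

/-- The maximal ideal at the origin. -/
def m0 : Ideal P2 := Ideal.span {X 0, X 1}

lemma constantCoeff_mem_m0 {p : P2} (hp : p ∈ m0) : MvPolynomial.coeff 0 p = 0 := by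
  rw [m0, Ideal.mem_span_pair] at hp
  obtain ⟨u, v, rfl⟩ := hp
  rw [← MvPolynomial.constantCoeff_eq]
  simp

lemma degree_add (u v : Fin 2 →₀ ℕ) : (u + v).degree = u.degree + v.degree := by
  simp only [Finsupp.degree_eq_weight_one]
  exact map_add _ u v

lemma mem_m0_pow_of (k : ℕ) :
    ∀ p : P2, (∀ m : Fin 2 →₀ ℕ, m.degree < k → MvPolynomial.coeff m p = 0) → p ∈ m0 ^ k := by
  -- reduce to monomials
  have mono : ∀ k : ℕ, ∀ (m : Fin 2 →₀ ℕ) (c : ℝ), k ≤ m.degree →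
      (monomial m c : P2) ∈ m0 ^ k := by
    intro k
    induction k with
    | zero => intro m c _; simp
    | succ k ih =>
      intro m c hm
      have hmne : m ≠ 0 := by
        intro h
        rw [h] at hm
        simp [map_zero] at hm
      obtain ⟨i, hi⟩ : ∃ i, m i ≠ 0 := by
        by_contra h
        push_neg at h
        exact hmne (Finsupp.ext fun i => h i)
      have hle : Finsupp.single i 1 ≤ m := Finsupp.single_le_iff.mpr (Nat.one_le_iff_ne_zero.mpr hi)
      have hsplit : Finsupp.single i 1 + (m - Finsupp.single i 1) = m :=
        add_tsub_cancel_of_le hle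
      have hdeg : k ≤ (m - Finsupp.single i 1).degree := by
        have := degree_add (Finsupp.single i 1) (m - Finsupp.single i 1)
        rw [hsplit] at this
        have hs : (Finsupp.single i (1:ℕ)).degree = 1 := by
          exact Finsupp.degree_single i 1
        omega
      have : (monomial m c : P2) = X i * monomial (m - Finsupp.single i 1) c := by
        rw [MvPolynomial.X, MvPolynomial.monomial_mul, hsplit, one_mul]
      rw [this, pow_succ']
      refine Ideal.mul_mem_mul ?_ (ih _ _ hdeg)
      have hXi : (X i : P2) ∈ m0 := by
        fin_cases i <;> exact Ideal.subset_span (by simp)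
      exact hXi
  intro p hp
  rw [← p.support_sum_monomial_coeff]
  refine Submodule.sum_mem _ fun m hm => ?_
  by_cases h : m.degree < k
  · rw [hp m h]; simp
  · exact mono k m _ (le_of_not_gt h)

lemma mem_m0_pow {k : ℕ} {p : P2} :
    p ∈ m0 ^ k ↔ ∀ m : Fin 2 →₀ ℕ, m.degree < k → MvPolynomial.coeff m p = 0 := by
  constructor
  · intro hp
    induction k generalizing p with
    | zero => intro m hm; omega
    | succ k ih =>
      rw [pow_succ] at hp
      refine Submodule.mul_induction_on hp ?_ ?_
      · intro a ha b hb m hm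
        rw [MvPolynomial.coeff_mul]
        refine Finset.sum_eq_zero fun x hx => ?_
        rw [Finset.HasAntidiagonal.mem_antidiagonal] at hx
        by_cases hv : x.2.degree = 0
        · have : x.2 = 0 := (Finsupp.degree_eq_zero_iff _).mp hv
          rw [this, constantCoeff_mem_m0 hb, mul_zero]
        · have hdu : x.1.degree < k := by
            have := degree_add x.1 x.2
            rw [hx] at this
            omega
          rw [ih ha x.1 hdu, zero_mul]
      · intro a b ha hb m hm
        rw [MvPolynomial.coeff_add, ha m hm, hb m hm, add_zero]
  · exact mem_m0_pow_of k p

/-! ### Shifts of the plane -/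

/-- shift by t -/
def sh (t : Fin 2 → ℝ) : P2 →ₐ[ℝ] P2 := aeval (fun i => X i + C (t i))

lemma sh_sh (t : Fin 2 → ℝ) (p : P2) : sh (-t) (sh t p) = p := by
  induction p using MvPolynomial.induction_on with
  | C a => simp [sh, MvPolynomial.algebraMap_eq]
  | add p q hp hq => simp [map_add, hp, hq]
  | mul_X p i hp =>
    rw [map_mul, map_mul, hp]
    congr 1
    rw [show (sh t) (X i) = X i + C (t i) by simp [sh]]
    rw [map_add, show (sh (-t)) (X i) = X i + C (-(t i)) by simp [sh],
      show (sh (-t)) (C (t i) : P2) = C (t i) by simp [sh, MvPolynomial.algebraMap_eq]]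
    rw [map_neg]
    ring

lemma sh_totalDegree_le (t : Fin 2 → ℝ) (p : P2) :
    (sh t p).totalDegree ≤ p.totalDegree := by
  conv_lhs => rw [← p.support_sum_monomial_coeff]
  rw [map_sum]
  refine (totalDegree_finset_sum _ _).trans (Finset.sup_le fun m hm => ?_)
  rw [sh, aeval_monomial]
  refine (totalDegree_mul _ _).trans ?_
  have h1 : (algebraMap ℝ P2 (coeff m p)).totalDegree = 0 := totalDegree_C _
  rw [h1, zero_add]
  refine le_trans ?_ (le_totalDegree hm)
  rw [Finsupp.prod]
  refine (totalDegree_finset_prod _ _).trans ?_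
  have : ∀ i ∈ m.support, ((X i + C (t i) : P2) ^ m i).totalDegree ≤ m i := by
    intro i _
    refine (totalDegree_pow _ _).trans ?_
    have : (X i + C (t i) : P2).totalDegree ≤ 1 := by
      refine (totalDegree_add _ _).trans ?_
      simp [totalDegree_X, totalDegree_C]
    calc m i * (X i + C (t i) : P2).totalDegree ≤ m i * 1 := Nat.mul_le_mul_left _ this
      _ = m i := mul_one _
  calc ∑ i ∈ m.support, ((X i + C (t i) : P2) ^ m i).totalDegree
      ≤ ∑ i ∈ m.support, m i := Finset.sum_le_sum this
    _ = m.degree := rfl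
    _ = m.sum fun _ e => e := by rw [Finsupp.degree]; rfl

/-! ### Degree truncation at the origin -/

/-- degree-≤k truncation at the origin -/
def T (k : ℕ) : P2 →ₗ[ℝ] P2 := ∑ i ∈ Finset.range (k+1), homogeneousComponent i

lemma coeff_T (k : ℕ) (p : P2) (m : Fin 2 →₀ ℕ) :
    coeff m (T k p) = if m.degree ≤ k then coeff m p else 0 := by
  rw [T, LinearMap.sum_apply]
  rw [MvPolynomial.coeff_sum]
  simp only [coeff_homogeneousComponent]
  · rw [Finset.sum_ite_eq (Finset.range (k+1)) m.degree (fun _ => coeff m p)]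
    simp [Nat.lt_succ_iff]

lemma T_eq_self {k : ℕ} {p : P2} (h : p.totalDegree ≤ k) : T k p = p := by
  ext m
  rw [coeff_T]
  by_cases hm : m.degree ≤ k
  · simp [hm]
  · simp only [hm, if_false]
    symm
    by_contra hc
    have := MvPolynomial.le_totalDegree (p := p) (s := m) (by rwa [MvPolynomial.mem_support_iff])
    have hdeg : m.degree = m.sum fun _ e => e := by rw [Finsupp.degree]; rfl
    omega

lemma totalDegree_T (k : ℕ) (p : P2) : (T k p).totalDegree ≤ k := by
  rw [MvPolynomial.totalDegree]
  refine Finset.sup_le fun m hm => ?_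
  rw [MvPolynomial.mem_support_iff, coeff_T] at hm
  by_cases h : m.degree ≤ k
  · have hdeg : m.degree = m.sum fun _ e => e := by rw [Finsupp.degree]; rfl
    omega
  · simp [h] at hm

lemma sub_T_mem (k : ℕ) (p : P2) : p - T k p ∈ m0 ^ (k+1) := by
  rw [mem_m0_pow]
  intro m hm
  rw [MvPolynomial.coeff_sub, coeff_T, if_pos (by omega), sub_self]

lemma T_eq_zero {k : ℕ} {p : P2} (h : p ∈ m0 ^ (k+1)) : T k p = 0 := by
  ext m
  rw [coeff_T]
  by_cases hm : m.degree ≤ k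
  · rw [if_pos hm, mem_m0_pow.mp h m (by omega)]
    simp
  · simp [hm]

section gamma
variable (γ₁ γ₂ : ℝ)

def shp : P2 →ₐ[ℝ] P2 := sh ![γ₁, γ₂]
def shm : P2 →ₐ[ℝ] P2 := sh (-![γ₁, γ₂])

lemma shm_shp (p : P2) : shm γ₁ γ₂ (shp γ₁ γ₂ p) = p := sh_sh _ p
lemma shp_shm (p : P2) : shp γ₁ γ₂ (shm γ₁ γ₂ p) = p := by
  have := sh_sh (-![γ₁, γ₂]) p
  rwa [neg_neg] at this

lemma map_shm_m0 : Ideal.map (shm γ₁ γ₂ : P2 →+* P2) m0 = mIdeal γ₁ γ₂ := by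
  rw [m0, Ideal.map_span, mIdeal]
  congr 1
  rw [Set.image_insert_eq, Set.image_singleton]
  have h0 : (shm γ₁ γ₂) (X 0) = X 0 - C γ₁ := by
    simp [shm, sh, MvPolynomial.algebraMap_eq]
    ring
  have h1 : (shm γ₁ γ₂) (X 1) = X 1 - C γ₂ := by
    simp [shm, sh, MvPolynomial.algebraMap_eq]
    ring
  rw [show ((shm γ₁ γ₂ : P2 →+* P2) : P2 → P2) = (shm γ₁ γ₂ : P2 → P2) from rfl, h0, h1]

lemma mem_mIdeal_pow {k : ℕ} {p : P2} :
    p ∈ (mIdeal γ₁ γ₂) ^ k ↔ shp γ₁ γ₂ p ∈ m0 ^ k := by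
  rw [← map_shm_m0 γ₁ γ₂, ← Ideal.map_pow]
  constructor
  · intro hp
    have := Ideal.mem_map_of_mem (shp γ₁ γ₂ : P2 →+* P2) hp
    rw [Ideal.map_map, show ((shp γ₁ γ₂ : P2 →+* P2).comp (shm γ₁ γ₂ : P2 →+* P2))
      = RingHom.id P2 from RingHom.ext fun q => shp_shm γ₁ γ₂ q, Ideal.map_id] at this
    exact this
  · intro hp
    have := Ideal.mem_map_of_mem (shm γ₁ γ₂ : P2 →+* P2) hp
    rw [show (↑(shm γ₁ γ₂) : P2 →+* P2) ((shp γ₁ γ₂) p) = p from shm_shp γ₁ γ₂ p] at this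
    exact this

lemma shp_totalDegree_le (p : P2) : (shp γ₁ γ₂ p).totalDegree ≤ p.totalDegree :=
  sh_totalDegree_le _ _
lemma shm_totalDegree_le (p : P2) : (shm γ₁ γ₂ p).totalDegree ≤ p.totalDegree :=
  sh_totalDegree_le _ _

/-- degree-≤k Taylor truncation at γ -/
def trunc (k : ℕ) (p : P2) : P2 := shm γ₁ γ₂ (T k (shp γ₁ γ₂ p))

lemma trunc_sub (k : ℕ) (p q : P2) :
    trunc γ₁ γ₂ k (p - q) = trunc γ₁ γ₂ k p - trunc γ₁ γ₂ k q := by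
  rw [trunc, trunc, trunc, map_sub, map_sub, map_sub]

lemma trunc_add (k : ℕ) (p q : P2) :
    trunc γ₁ γ₂ k (p + q) = trunc γ₁ γ₂ k p + trunc γ₁ γ₂ k q := by
  rw [trunc, trunc, trunc, map_add, map_add, map_add]

lemma totalDegree_trunc (k : ℕ) (p : P2) : (trunc γ₁ γ₂ k p).totalDegree ≤ k :=
  (shm_totalDegree_le _ _ _).trans (totalDegree_T _ _)

lemma trunc_eq_self {k : ℕ} {p : P2} (h : p.totalDegree ≤ k) : trunc γ₁ γ₂ k p = p := by
  rw [trunc, T_eq_self ((shp_totalDegree_le _ _ _).trans h), shm_shp]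

lemma sub_trunc_mem (k : ℕ) (p : P2) : p - trunc γ₁ γ₂ k p ∈ (mIdeal γ₁ γ₂) ^ (k+1) := by
  rw [mem_mIdeal_pow, map_sub, trunc, shp_shm]
  exact sub_T_mem k _

lemma trunc_eq_zero {k : ℕ} {p : P2} (h : p ∈ (mIdeal γ₁ γ₂) ^ (k+1)) :
    trunc γ₁ γ₂ k p = 0 := by
  rw [trunc, T_eq_zero ((mem_mIdeal_pow γ₁ γ₂).mp h), map_zero]

lemma edgeForm_mem (a b : ℝ) : edgeForm γ₁ γ₂ a b ∈ mIdeal γ₁ γ₂ := by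
  rw [edgeForm, mIdeal]
  exact Ideal.add_mem _
    (Ideal.mul_mem_left _ _ (Ideal.subset_span (by simp)))
    (Ideal.mul_mem_left _ _ (Ideal.subset_span (by simp)))

lemma edgeForm_pow_mem (a b : ℝ) (r : ℕ) :
    edgeForm γ₁ γ₂ a b ^ (r+1) ∈ (mIdeal γ₁ γ₂) ^ (r+1) :=
  Ideal.pow_mem_pow (edgeForm_mem γ₁ γ₂ a b) _

lemma span_edge_pow_le (a b : ℝ) (r : ℕ) :
    Ideal.span {edgeForm γ₁ γ₂ a b ^ (r+1)} ≤ (mIdeal γ₁ γ₂) ^ (r+1) := by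
  rw [Ideal.span_le, Set.singleton_subset_iff]
  exact edgeForm_pow_mem γ₁ γ₂ a b r

lemma totalDegree_edgeForm (a b : ℝ) : (edgeForm γ₁ γ₂ a b).totalDegree ≤ 1 := by
  rw [edgeForm]
  refine (totalDegree_add _ _).trans (max_le ?_ ?_) <;>
  · refine (totalDegree_mul _ _).trans ?_
    rw [totalDegree_C, zero_add, sub_eq_add_neg]
    refine (totalDegree_add _ _).trans (max_le ?_ ?_)
    · exact le_of_eq (totalDegree_X _)
    · rw [totalDegree_neg, totalDegree_C]; omega

lemma totalDegree_edgeForm_pow (a b : ℝ) (r : ℕ) :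
    (edgeForm γ₁ γ₂ a b ^ (r+1)).totalDegree ≤ r + 1 := by
  refine (totalDegree_pow _ _).trans ?_
  have := totalDegree_edgeForm γ₁ γ₂ a b
  calc (r+1) * (edgeForm γ₁ γ₂ a b).totalDegree ≤ (r+1) * 1 := Nat.mul_le_mul_left _ this
    _ = r + 1 := mul_one _

/-- eq_zero of small-degree elements of high powers of the maximal ideal -/
lemma eq_zero_of_mem_pow {k : ℕ} {p : P2} (hmem : p ∈ (mIdeal γ₁ γ₂) ^ (k+1))
    (hdeg : p.totalDegree ≤ k) : p = 0 := by
  rw [← trunc_eq_self γ₁ γ₂ hdeg, trunc_eq_zero γ₁ γ₂ hmem]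

/-- The key truncation identity. -/
lemma trunc_mul {j k : ℕ} (hjk : j ≤ k) {q h : P2} (hq : q ∈ (mIdeal γ₁ γ₂) ^ j)
    (hqd : q.totalDegree ≤ j) :
    trunc γ₁ γ₂ k (q * h) = q * trunc γ₁ γ₂ (k - j) h := by
  set t := k - j with ht
  have hjt : j + t = k := by omega
  have h1 : q * (h - trunc γ₁ γ₂ t h) ∈ (mIdeal γ₁ γ₂) ^ (k + 1) := by
    have := Ideal.mul_mem_mul hq (sub_trunc_mem γ₁ γ₂ t h)
    rwa [← pow_add, show j + (t + 1) = k + 1 by omega] at this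
  have hsplit : q * h = q * trunc γ₁ γ₂ t h + q * (h - trunc γ₁ γ₂ t h) := by ring
  rw [hsplit, trunc_add, trunc_eq_zero γ₁ γ₂ h1, add_zero]
  refine trunc_eq_self γ₁ γ₂ ?_
  refine (totalDegree_mul _ _).trans ?_
  have := totalDegree_trunc γ₁ γ₂ t h
  omega

end gamma

/-! ### Dimension of the polynomials of degree at most `s` in the plane -/

lemma sum_range_succ_id (s : ℕ) : ∑ k ∈ Finset.range (s+1), (k+1) = (s+2).choose 2 := by
  induction s with
  | zero => simp
  | succ s ih =>
    rw [Finset.sum_range_succ, ih, show s+1+2 = (s+2)+1 from rfl]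
    rw [show (s+2+1).choose 2 = (s+2).choose 1 + (s+2).choose 2 from Nat.choose_succ_succ (s+2) 1]
    rw [Nat.choose_one_right]
    omega

def Aset (s : ℕ) : Finset (ℕ × ℕ) :=
  (Finset.range (s+1)).biUnion fun k => Finset.HasAntidiagonal.antidiagonal k

lemma mem_Aset {s : ℕ} {p : ℕ × ℕ} : p ∈ Aset s ↔ p.1 + p.2 ≤ s := by
  simp only [Aset, Finset.mem_biUnion, Finset.mem_range, Finset.HasAntidiagonal.mem_antidiagonal]
  constructor
  · rintro ⟨k, hk, rfl⟩; omega
  · intro h; exact ⟨p.1 + p.2, by omega, rfl⟩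

lemma card_Aset (s : ℕ) : (Aset s).card = (s+2).choose 2 := by
  rw [Aset, Finset.card_biUnion]
  · rw [← sum_range_succ_id s]
    refine Finset.sum_congr rfl fun k _ => Finset.Nat.card_antidiagonal k
  · intro x _ y _ hxy
    simp only [Finset.disjoint_left]
    intro p hp hq
    rw [Finset.HasAntidiagonal.mem_antidiagonal] at hp hq
    omega

def S2 (s : ℕ) : Set (Fin 2 →₀ ℕ) := {n | (n.sum fun _ e => e) ≤ s}

def equivS2 (s : ℕ) : S2 s ≃ {p : ℕ × ℕ // p ∈ Aset s} := by
  refine Equiv.subtypeEquiv ((Finsupp.equivFunOnFinite).trans (finTwoArrowEquiv ℕ)) ?_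
  intro n
  rw [mem_Aset]
  have hsum : (n.sum fun _ e => e) = n 0 + n 1 := by
    rw [Finsupp.sum_fintype _ _ (fun _ => rfl), Fin.sum_univ_two]
  simp [S2, hsum, finTwoArrowEquiv, Finsupp.equivFunOnFinite]

instance fintypeS2 (s : ℕ) : Fintype (S2 s) := Fintype.ofEquiv _ (equivS2 s).symm

lemma card_S2 (s : ℕ) : Fintype.card (S2 s) = (s+2).choose 2 := by
  rw [Fintype.card_congr (equivS2 s), Fintype.card_coe, card_Aset]

lemma finrank_rtd (s : ℕ) :
    Module.finrank ℝ (restrictTotalDegree (Fin 2) ℝ s) = (s+2).choose 2 := by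
  have B : Module.Basis (S2 s) ℝ (restrictTotalDegree (Fin 2) ℝ s) := basisRestrictSupport ℝ _
  rw [Module.finrank_eq_card_basis B, card_S2]

/-! ### The spline space -/

section spline
variable {n : ℕ} [NeZero n] {d r s : ℕ} {γ₁ γ₂ : ℝ} {a b : Fin n → ℝ}

lemma mem_splineSpace {x : Fin n → P2} :
    x ∈ splineSpace n d r s γ₁ γ₂ a b ↔
      (∀ i, (x i).totalDegree ≤ d) ∧
      (∀ i, x i - x (i+1) ∈
        (Ideal.span {edgeForm γ₁ γ₂ (a i) (b i) ^ (r+1)}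
          ⊓ (mIdeal γ₁ γ₂) ^ (s+1) : Ideal P2)) := by
  simp [splineSpace, Submodule.mem_inf, Submodule.mem_iInf, Submodule.mem_comap,
    LinearMap.sub_apply, LinearMap.proj_apply, mem_restrictTotalDegree,
    Submodule.restrictScalars_mem]

/-- The diagonal embedding of `P2` in `Fin n → P2`. -/
def diag (n : ℕ) : P2 →ₗ[ℝ] (Fin n → P2) where
  toFun p := fun _ => p
  map_add' _ _ := rfl
  map_smul' _ _ := rfl

lemma diag_injective : Function.Injective (diag n) := by
  intro p q h
  exact congrFun h 0

/-- The trivial splines: global polynomials of degree at most `s`. -/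
def Triv (n s : ℕ) [NeZero n] : Submodule ℝ (Fin n → P2) :=
  Submodule.map (diag n) (restrictTotalDegree (Fin 2) ℝ s)

lemma finrank_Triv (n s : ℕ) [NeZero n] :
    Module.finrank ℝ (Triv n s) = (s+2).choose 2 := by
  rw [Triv, ← finrank_rtd s]
  exact (LinearEquiv.finrank_eq
    (Submodule.equivMapOfInjective (diag n) diag_injective
      (restrictTotalDegree (Fin 2) ℝ s))).symm

lemma Triv_le_splineSpace (r' s' : ℕ) : Triv n s ≤ splineSpace n s r' s' γ₁ γ₂ a b := by
  rintro x ⟨p, hp, rfl⟩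
  rw [mem_splineSpace]
  refine ⟨fun i => (mem_restrictTotalDegree _ _ _).mp hp, fun i => ?_⟩
  have : diag n p i - diag n p (i+1) = 0 := sub_self p
  rw [this]
  exact Submodule.zero_mem _

/-- The forgetful map into the finite-dimensional product. -/
def toPi (S : Submodule ℝ (Fin n → P2)) (hS : ∀ x ∈ S, ∀ i, (x i).totalDegree ≤ d) :
    S →ₗ[ℝ] (Fin n → restrictTotalDegree (Fin 2) ℝ d) where
  toFun x := fun i => ⟨x.1 i, (mem_restrictTotalDegree _ _ _).mpr (hS x.1 x.2 i)⟩
  map_add' _ _ := rfl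
  map_smul' _ _ := rfl

lemma fd_splineSpace : FiniteDimensional ℝ (splineSpace n d r s γ₁ γ₂ a b) := by
  have hS : ∀ x ∈ splineSpace n d r s γ₁ γ₂ a b, ∀ i, (x i).totalDegree ≤ d :=
    fun x hx => (mem_splineSpace.mp hx).1
  refine FiniteDimensional.of_injective (toPi _ hS) ?_
  intro x y h
  apply Subtype.ext
  funext i
  exact congrArg Subtype.val (congrFun h i)

open Fin.NatCast in
/-- Supersmooth degree-`s` splines are trivial. -/
lemma splineSpace_supersmooth_le_Triv (hrs : r < s) :
    splineSpace n s r s γ₁ γ₂ a b ≤ Triv n s := by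
  intro x hx
  rw [mem_splineSpace] at hx
  obtain ⟨hdeg, hdiff⟩ := hx
  have hzero : ∀ i : Fin n, x i - x (i+1) = 0 := by
    intro i
    refine eq_zero_of_mem_pow γ₁ γ₂ ((Submodule.mem_inf.mp (hdiff i)).2) ?_
    rw [sub_eq_add_neg]
    refine (totalDegree_add _ _).trans (max_le (hdeg i) ?_)
    rw [totalDegree_neg]
    exact hdeg (i+1)
  have hstep : ∀ i : Fin n, x (i+1) = x i := fun i => (sub_eq_zero.mp (hzero i)).symm
  have hconst : ∀ i : Fin n, x i = x 0 := by
    have key : ∀ j : ℕ, x (j : Fin n) = x 0 := by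
      intro j
      induction j with
      | zero => simp
      | succ j ih =>
        have : ((j+1 : ℕ) : Fin n) = ((j : ℕ) : Fin n) + 1 := by push_cast; ring
        rw [this, hstep, ih]
    intro i
    have := key (i : ℕ)
    rwa [Fin.cast_val_eq_self] at this
  refine ⟨x 0, (mem_restrictTotalDegree _ _ _).mpr (hdeg 0), ?_⟩
  funext i
  exact (hconst i).symm

/-- The key step: if the degree-`s` splines are trivial, every spline is supersmooth. -/
lemma smooth_le_supersmooth (hrs : r < s)
    (htriv : splineSpace n s r r γ₁ γ₂ a b ≤ Triv n s) (d : ℕ) :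
    splineSpace n d r r γ₁ γ₂ a b ≤ splineSpace n d r s γ₁ γ₂ a b := by
  intro x hx
  rw [mem_splineSpace] at hx ⊢
  obtain ⟨hdeg, hdiff⟩ := hx
  refine ⟨hdeg, fun i => ?_⟩
  have hspan : ∀ i : Fin n, x i - x (i+1) ∈
      Ideal.span {edgeForm γ₁ γ₂ (a i) (b i) ^ (r+1)} :=
    fun i => (Submodule.mem_inf.mp (hdiff i)).1
  -- the truncated spline
  set F : Fin n → P2 := fun i => trunc γ₁ γ₂ s (x i) with hF
  have hFdiff : ∀ i : Fin n, F i - F (i+1) = trunc γ₁ γ₂ s (x i - x (i+1)) := by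
    intro i
    rw [trunc_sub]
  have hFmem : F ∈ splineSpace n s r r γ₁ γ₂ a b := by
    rw [mem_splineSpace]
    refine ⟨fun i => totalDegree_trunc γ₁ γ₂ s (x i), fun i => ?_⟩
    obtain ⟨h, hh⟩ := Ideal.mem_span_singleton.mp (hspan i)
    rw [hFdiff i, hh, trunc_mul γ₁ γ₂ (by omega : r+1 ≤ s)
      (edgeForm_pow_mem γ₁ γ₂ (a i) (b i) r) (totalDegree_edgeForm_pow γ₁ γ₂ (a i) (b i) r)]
    refine Submodule.mem_inf.mpr ⟨Ideal.mem_span_singleton.mpr ⟨_, rfl⟩, ?_⟩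
    exact span_edge_pow_le γ₁ γ₂ (a i) (b i) r
      (Ideal.mem_span_singleton.mpr ⟨_, rfl⟩)
  obtain ⟨p, _, hp⟩ := htriv hFmem
  have hFzero : F i - F (i+1) = 0 := by
    have h1 : F i = p := (congrFun hp i).symm
    have h2 : F (i+1) = p := (congrFun hp (i+1)).symm
    rw [h1, h2, sub_self]
  have htr0 : trunc γ₁ γ₂ s (x i - x (i+1)) = 0 := by rw [← hFdiff i, hFzero]
  have hmem : x i - x (i+1) ∈ (mIdeal γ₁ γ₂) ^ (s+1) := by
    have := sub_trunc_mem γ₁ γ₂ s (x i - x (i+1))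
    rwa [htr0, sub_zero] at this
  exact Submodule.mem_inf.mpr ⟨hspan i, hmem⟩

end spline
end FHaux

open FHaux in
/-- Floater–Hu degeneracy criterion on vertex stars: for `0 ≤ r < s`, every `C^r` spline on
the star of the interior vertex `γ` (with `n ≥ 3` interior edges, consecutive edges having
distinct slopes) is `C^s` at `γ` — i.e. `S^r(Δ) ⊆ S^{r,s}(Δ°)` in every degree — if and only
if the space of `C^r` splines of degree at most `s` consists only of global polynomials,
i.e. `dim S_s^r(Δ) = C(s+2,2)`. -/
theorem stmt17 (n r s : ℕ) [NeZero n] (hn : 3 ≤ n) (hrs : r < s)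
    (γ₁ γ₂ : ℝ) (a b : Fin n → ℝ)
    (hab : ∀ i, (![a i, b i] : Fin 2 → ℝ) ≠ 0)
    (hconsec : ∀ i : Fin n,
      Projectivization.mk ℝ ![a i, b i] (hab i)
        ≠ Projectivization.mk ℝ ![a (i + 1), b (i + 1)] (hab (i + 1))) :
    (∀ d : ℕ, splineSpace n d r r γ₁ γ₂ a b ≤ splineSpace n d r s γ₁ γ₂ a b)
      ↔ Module.finrank ℝ ↥(splineSpace n s r r γ₁ γ₂ a b) = (s + 2).choose 2 := by
  haveI : FiniteDimensional ℝ (splineSpace n s r r γ₁ γ₂ a b) := fd_splineSpace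
  constructor
  · intro H
    have h1 : splineSpace n s r r γ₁ γ₂ a b ≤ Triv n s :=
      (H s).trans (splineSpace_supersmooth_le_Triv hrs)
    have h2 : Triv n s ≤ splineSpace n s r r γ₁ γ₂ a b := Triv_le_splineSpace r r
    rw [le_antisymm h1 h2, finrank_Triv]
  · intro hfr
    have heq : Triv n s = splineSpace n s r r γ₁ γ₂ a b := by
      refine Submodule.eq_of_le_of_finrank_le (Triv_le_splineSpace r r) ?_
      rw [hfr, finrank_Triv]
    exact smooth_le_supersmooth hrs (le_of_eq heq.symm)
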